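/- arXiv:1906.12092 — 4 statements merged into one kernel-verified Lean document; each statement's English description precedes it below -/
import Mathlib

section
/- Let E be a standard Borel measurable space, let l ≥ 1, let P be a probability measure on E^l, and let Q be a probability measure on E. For each k ∈ {1, …, l} let P_k be the k-th marginal of P, i.e., the pushforward of P under the k-th coordinate projection. Then D(P ‖ Q^{⊗l}) ≥ Σ_{k=1}^{l} D(P_k ‖ Q), where Q^{⊗l} is the l-fold product of Q. -/
/-!
Split `E^(l+1) = E × E^l`. Disintegrating `P` along the first coordinate, the chain rule gives
`D(P ‖ Q ⊗ Q^l) = D(P₁ ‖ Q) + D(P ‖ P₁ ⊗ Q^l)`, and by data processing for the second projection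
the last term is at least the divergence of the law of the remaining coordinates from `Q^l`;
induction on `l` finishes. For probability measures the divergence here agrees with Mathlib's
`InformationTheory.klDiv`, for which the chain rule and data processing are available.
-/

open MeasureTheory Real
open scoped ENNReal NNReal

open scoped Classical in
/-- Kullback-Leibler divergence: the integral of `log (dm/dn)` with respect to `m`
if `m` is absolutely continuous w.r.t. `n` and the log-density is `m`-integrable,
and infinity otherwise. -/
noncomputable def klDiv {α : Type*} [MeasurableSpace α] (μ ν : Measure α) : ℝ≥0∞ :=
  if μ ≪ ν ∧ Integrable (fun x => log (μ.rnDeriv ν x).toReal) μ then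
    ENNReal.ofReal (∫ x, log (μ.rnDeriv ν x).toReal ∂μ)
  else ⊤

open ProbabilityTheory

lemma klDiv_eq_informationTheory_klDiv {α : Type*} [MeasurableSpace α] {μ ν : Measure α}
    (h : μ Set.univ = ν Set.univ) : klDiv μ ν = InformationTheory.klDiv μ ν := by
  rw [klDiv, ← llr_def, InformationTheory.klDiv_def, measureReal_def, measureReal_def, h,
    add_sub_cancel_right]

namespace InformationTheory

lemma klDiv_map_measurableEquiv {α β : Type*} [MeasurableSpace α] [MeasurableSpace β]
    (e : α ≃ᵐ β) (μ ν : Measure α) [IsFiniteMeasure μ] [IsFiniteMeasure ν] :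
    klDiv (μ.map e) (ν.map e) = klDiv μ ν := by
  refine le_antisymm (klDiv_map_le μ ν e.measurable) ?_
  calc klDiv μ ν = klDiv ((μ.map e).map e.symm) ((ν.map e).map e.symm) := by
        simp only [MeasurableEquiv.map_symm_map]
    _ ≤ klDiv (μ.map e) (ν.map e) := klDiv_map_le _ _ e.symm.measurable

lemma klDiv_fst_add_klDiv_snd_le_klDiv_prod {α β : Type*} [MeasurableSpace α] [MeasurableSpace β]
    [StandardBorelSpace β] (P : Measure (α × β)) [IsProbabilityMeasure P] (ν : Measure α)
    (η : Measure β) [IsProbabilityMeasure ν] [IsProbabilityMeasure η] :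
    klDiv P.fst ν + klDiv P.snd η ≤ klDiv P (ν.prod η) := by
  have : Nonempty β := (nonempty_of_isProbabilityMeasure P).map Prod.snd
  have hsnd : klDiv P.snd η ≤ klDiv P (P.fst.prod η) := by
    simpa [Measure.snd] using klDiv_map_le P (P.fst.prod η) measurable_snd
  calc klDiv P.fst ν + klDiv P.snd η ≤ klDiv P.fst ν + klDiv P (P.fst.prod η) := by gcongr
    _ = klDiv (P.fst ⊗ₘ P.condKernel) (ν ⊗ₘ Kernel.const α η) := by
        rw [klDiv_compProd_eq_add, Measure.disintegrate P P.condKernel, Measure.compProd_const]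
    _ = klDiv P (ν.prod η) := by rw [Measure.disintegrate P P.condKernel, Measure.compProd_const]

lemma sum_klDiv_map_eval_le_klDiv_pi {E : Type*} [MeasurableSpace E] [StandardBorelSpace E]
    (n : ℕ) (P : Measure (Fin n → E)) [IsProbabilityMeasure P] (Q : Measure E)
    [IsProbabilityMeasure Q] :
    ∑ k, klDiv (P.map fun x => x k) Q ≤ klDiv P (Measure.pi fun _ => Q) := by
  induction n with
  | zero => simp
  | succ n ih =>
    let e := MeasurableEquiv.piFinSuccAbove (fun _ : Fin (n + 1) => E) 0
    have : IsProbabilityMeasure (P.map e) :=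
      Measure.isProbabilityMeasure_map e.measurable.aemeasurable
    have hfst : (P.map e).fst = P.map fun x => x 0 := by
      rw [Measure.fst, Measure.map_map measurable_fst e.measurable]
      rfl
    have hsnd (k : Fin n) : (P.map e).snd.map (fun x => x k) = P.map fun x => x k.succ := by
      rw [Measure.snd, Measure.map_map measurable_snd e.measurable,
        Measure.map_map (measurable_pi_apply k) (measurable_snd.comp e.measurable)]
      rfl
    have hQ : (Measure.pi fun _ => Q).map e = Q.prod (Measure.pi fun _ : Fin n => Q) :=
      (measurePreserving_piFinSuccAbove (fun _ => Q) 0).map_eq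
    calc ∑ k, klDiv (P.map fun x => x k) Q
        = klDiv (P.map e).fst Q + ∑ k : Fin n, klDiv ((P.map e).snd.map fun x => x k) Q := by
          simp only [Fin.sum_univ_succ, hfst, hsnd]
      _ ≤ klDiv (P.map e).fst Q + klDiv (P.map e).snd (Measure.pi fun _ => Q) := by
          gcongr
          exact ih _
      _ ≤ klDiv (P.map e) (Q.prod (Measure.pi fun _ : Fin n => Q)) :=
          klDiv_fst_add_klDiv_snd_le_klDiv_prod _ _ _
      _ = klDiv P (Measure.pi fun _ => Q) := by rw [← hQ, klDiv_map_measurableEquiv]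

end InformationTheory

theorem sum_klDiv_marginal_le_general {E : Type*} [MeasurableSpace E] [StandardBorelSpace E]
    (l : ℕ) (P : Measure (Fin l → E)) (Q : Measure E)
    [IsProbabilityMeasure P] [IsProbabilityMeasure Q] :
    ∑ k : Fin l, klDiv (P.map (fun f => f k)) Q ≤
      klDiv P (Measure.pi (fun _ : Fin l => Q)) := by
  have hmarginal (k : Fin l) : (P.map fun f => f k) Set.univ = Q Set.univ := by
    simp [Measure.map_apply (measurable_pi_apply k) MeasurableSet.univ]
  rw [Finset.sum_congr rfl fun k _ => klDiv_eq_informationTheory_klDiv (hmarginal k),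
    klDiv_eq_informationTheory_klDiv (by simp)]
  exact InformationTheory.sum_klDiv_map_eval_le_klDiv_pi l P Q

/-- Superadditivity of Kullback-Leibler divergence with respect to a product reference
measure: the divergence of `P` from the `l`-fold product `Q^l` is at least the sum of the
divergences of the marginals of `P` from `Q`. -/
theorem sum_klDiv_marginal_le {E : Type*} [MeasurableSpace E] [StandardBorelSpace E]
    (l : ℕ) (hl : 1 ≤ l) (P : Measure (Fin l → E)) (Q : Measure E)
    [IsProbabilityMeasure P] [IsProbabilityMeasure Q] :
    ∑ k : Fin l, klDiv (P.map (fun f => f k)) Q ≤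
      klDiv P (Measure.pi (fun _ : Fin l => Q)) :=
  sum_klDiv_marginal_le_general l P Q
end

section
/- Let E be a standard Borel measurable space, let l ≥ 1, let P be a probability measure on E^l, and let Q be a probability measure on E. Let P̄ = (1/l)·(P_1 + ⋯ + P_l) be the average of the marginals P_k of P (the pushforwards of P under the coordinate projections). Then D(P ‖ Q^{⊗l}) ≥ l · D(P̄ ‖ Q). -/
/-!
Gibbs' variational inequality: if `∫ exp g d(Q^l) ≤ 1`, then `∫ g dP ≤ D(P ‖ Q^l)`, and
integrability of `g` comes for free once `g` is bounded below by an integrable function.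
Test it with `g x = ∑ₖ φ (x k)`, where `φ = log (dP̄/dQ)`. Since `Q^l` is a product measure,
`∫ exp g d(Q^l) = (∫ dP̄/dQ dQ)^l = 1`, while `∫ g dP = ∑ₖ ∫ φ dPₖ = l ∫ φ dP̄ = l D(P̄ ‖ Q)`.
The negative part of `φ` is always `P̄`-integrable, because `t log t ≥ -1`.
-/

open MeasureTheory Real
open scoped ENNReal NNReal

lemma ofReal_exp_log_toReal_le {t : ℝ≥0∞} (ht : t ≠ 0) :
    ENNReal.ofReal (exp (log t.toReal)) ≤ t := by
  rcases eq_or_ne t ∞ with rfl | ht_top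
  · exact le_top
  · rw [exp_log (ENNReal.toReal_pos ht ht_top), ENNReal.ofReal_toReal ht_top]

lemma mul_abs_min_log_zero_le_one {t : ℝ} (ht : 0 ≤ t) : t * |min (log t) 0| ≤ 1 := by
  rcases le_or_gt 1 t with h1 | h1
  · simp [min_eq_right (log_nonneg h1)]
  · rw [min_eq_left (log_nonpos ht h1.le), abs_of_nonpos (log_nonpos ht h1.le)]
    nlinarith [self_sub_one_le_mul_log ht]

section Divergence

variable {α : Type*} [MeasurableSpace α] {μ ν : Measure α}

lemma klDiv_ne_top_iff : klDiv μ ν ≠ ∞ ↔ μ ≪ ν ∧ Integrable (llr μ ν) μ := by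
  unfold klDiv
  split_ifs with h <;> simp [h, llr_def]

lemma klDiv_of_ac_of_integrable (hμν : μ ≪ ν) (hllr : Integrable (llr μ ν) μ) :
    klDiv μ ν = ENNReal.ofReal (∫ x, llr μ ν x ∂μ) :=
  if_pos ⟨hμν, hllr⟩

lemma integrable_min_llr_zero [SigmaFinite μ] [IsFiniteMeasure ν] (hμν : μ ≪ ν) :
    Integrable (fun x => min (llr μ ν x) 0) μ := by
  refine ⟨((measurable_llr μ ν).min measurable_const).aestronglyMeasurable, ?_⟩
  have hpt : ∀ᵐ x ∂ν, μ.rnDeriv ν x * ‖min (llr μ ν x) 0‖ₑ ≤ 1 := by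
    filter_upwards [μ.rnDeriv_lt_top ν] with x hx
    rw [← ENNReal.ofReal_toReal hx.ne, Real.enorm_eq_ofReal_abs,
      ← ENNReal.ofReal_mul ENNReal.toReal_nonneg, ← ENNReal.ofReal_one]
    exact ENNReal.ofReal_le_ofReal (mul_abs_min_log_zero_le_one ENNReal.toReal_nonneg)
  calc ∫⁻ x, ‖min (llr μ ν x) 0‖ₑ ∂μ
      = ∫⁻ x, μ.rnDeriv ν x * ‖min (llr μ ν x) 0‖ₑ ∂ν :=
        (lintegral_rnDeriv_mul hμν
          ((measurable_llr μ ν).min measurable_const).enorm.aemeasurable).symm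
    _ ≤ ∫⁻ _, 1 ∂ν := lintegral_mono_ae hpt
    _ < ∞ := by simp

variable {g : α → ℝ} {T : Set α}

lemma lintegral_exp_sub_llr_le [SigmaFinite μ] [SigmaFinite ν] (hμν : μ ≪ ν) (hg : Measurable g)
    (hT : MeasurableSet T) (hμT : ∀ᵐ x ∂μ, x ∈ T) :
    ∫⁻ x, ENNReal.ofReal (exp (g x - llr μ ν x)) ∂μ
      ≤ ∫⁻ x in T, ENNReal.ofReal (exp (g x)) ∂ν := by
  have hpt : ∀ᵐ x ∂ν, μ.rnDeriv ν x * ENNReal.ofReal (exp (g x - llr μ ν x))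
      ≤ ENNReal.ofReal (exp (g x)) := by
    filter_upwards [μ.rnDeriv_lt_top ν] with x hx
    rcases eq_or_ne (μ.rnDeriv ν x) 0 with h0 | h0
    · simp [h0]
    have hpos := ENNReal.toReal_pos h0 hx.ne
    rw [← ENNReal.ofReal_toReal hx.ne, ← ENNReal.ofReal_mul hpos.le, exp_sub, llr_def,
      exp_log hpos, mul_div_cancel₀ _ hpos.ne']
  calc ∫⁻ x, ENNReal.ofReal (exp (g x - llr μ ν x)) ∂μ
      = ∫⁻ x in T, ENNReal.ofReal (exp (g x - llr μ ν x)) ∂μ := by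
        rw [Measure.restrict_eq_self_of_ae_mem hμT]
    _ = ∫⁻ x in T, μ.rnDeriv ν x * ENNReal.ofReal (exp (g x - llr μ ν x)) ∂ν :=
        (setLIntegral_rnDeriv_mul hμν
          (hg.sub (measurable_llr μ ν)).exp.ennreal_ofReal.aemeasurable hT).symm
    _ ≤ ∫⁻ x in T, ENNReal.ofReal (exp (g x)) ∂ν :=
        lintegral_mono_ae (ae_restrict_of_ae hpt)

lemma integral_le_integral_llr_of_setLIntegral_exp_le [IsProbabilityMeasure μ] [SigmaFinite ν]
    {h : α → ℝ} (hμν : μ ≪ ν) (hllr : Integrable (llr μ ν) μ) (hg : Measurable g)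
    (hh : Integrable h μ) (hhg : h ≤ g) (hT : MeasurableSet T) (hμT : ∀ᵐ x ∂μ, x ∈ T)
    (hexp : ∫⁻ x in T, ENNReal.ofReal (exp (g x)) ∂ν ≤ 1) :
    Integrable g μ ∧ ∫ x, g x ∂μ ≤ ∫ x, llr μ ν x ∂μ := by
  have hlin := (lintegral_exp_sub_llr_le hμν hg hT hμT).trans hexp
  have hexp_nonneg : 0 ≤ᵐ[μ] fun x => exp (g x - llr μ ν x) :=
    ae_of_all _ fun _ => (exp_pos _).le
  have hE : Integrable (fun x => exp (g x - llr μ ν x)) μ := by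
    refine ⟨(hg.sub (measurable_llr μ ν)).exp.aestronglyMeasurable, ?_⟩
    rw [hasFiniteIntegral_iff_ofReal hexp_nonneg]
    exact hlin.trans_lt ENNReal.one_lt_top
  have hE_le : ∫ x, exp (g x - llr μ ν x) ∂μ ≤ 1 := by
    rw [integral_eq_lintegral_of_nonneg_ae hexp_nonneg hE.aestronglyMeasurable]
    exact ENNReal.toReal_le_of_le_ofReal zero_le_one (by rwa [ENNReal.ofReal_one])
  have hup : ∀ x, g x - llr μ ν x ≤ exp (g x - llr μ ν x) - 1 := fun x => by
    linarith [add_one_le_exp (g x - llr μ ν x)]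
  have hg_int : Integrable g μ :=
    integrable_of_le_of_le hg.aestronglyMeasurable (ae_of_all _ hhg)
      (ae_of_all _ fun x => show g x ≤ llr μ ν x + exp (g x - llr μ ν x) by linarith [hup x])
      hh (hllr.add hE)
  refine ⟨hg_int, ?_⟩
  have := integral_mono (f := fun x => g x - llr μ ν x)
    (g := fun x => exp (g x - llr μ ν x) - 1) (hg_int.sub hllr) (hE.sub (integrable_const 1)) hup
  rw [integral_sub hg_int hllr, integral_sub hE (integrable_const 1)] at this
  simp only [integral_const, probReal_univ, smul_eq_mul, mul_one] at this
  linarith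

end Divergence

lemma integrable_of_integrable_sum_of_le {α ι : Type*} [MeasurableSpace α] [Fintype ι]
    {μ : Measure α} {f h : ι → α → ℝ} (hf : ∀ i, AEStronglyMeasurable (f i) μ)
    (hsum : Integrable (fun x => ∑ i, f i x) μ) (hh : ∀ i, Integrable (h i) μ)
    (hle : ∀ i, h i ≤ f i) (i : ι) : Integrable (f i) μ := by
  have hbound : ∀ x, f i x ≤ h i x + ((∑ j, f j x) - ∑ j, h j x) := fun x => by
    have := Finset.single_le_sum (f := fun j => f j x - h j x)
      (fun j _ => sub_nonneg.2 (hle j x)) (Finset.mem_univ i)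
    simp only [Finset.sum_sub_distrib] at this
    linarith
  exact integrable_of_le_of_le (hf i) (ae_of_all _ (hle i)) (ae_of_all _ hbound) (hh i)
    ((hh i).add (hsum.sub (integrable_finsetSum _ fun j _ => hh j)))

lemma lintegral_pi_prod_eq_pow {E ι : Type*} [MeasurableSpace E] [Fintype ι] (Q : Measure E)
    [IsProbabilityMeasure Q] {h : E → ℝ≥0∞} (hh : Measurable h) :
    ∫⁻ x, ∏ k, h (x k) ∂(Measure.pi fun _ : ι => Q) = (∫⁻ a, h a ∂Q) ^ Fintype.card ι := by
  rw [ProbabilityTheory.lintegral_prod_eq_prod_lintegral_of_indepFun _ _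
    (ProbabilityTheory.iIndepFun_pi fun _ => hh.aemeasurable)
    fun k => hh.comp (measurable_pi_apply k)]
  simp_rw [(measurePreserving_eval (fun _ : ι => Q) _).lintegral_comp hh]
  simp

-- Since `log 0 = 0`, `exp (llr R Q) = 1` where `dR/dQ` vanishes: those points must be cut out.
lemma setLIntegral_exp_sum_llr_le {E ι : Type*} [MeasurableSpace E] [Fintype ι]
    (R Q : Measure E) [IsProbabilityMeasure Q] :
    ∫⁻ x in Set.univ.pi fun _ : ι => {a | R.rnDeriv Q a ≠ 0},
        ENNReal.ofReal (exp (∑ k, llr R Q (x k))) ∂(Measure.pi fun _ => Q)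
      ≤ R Set.univ ^ Fintype.card ι := by
  set S := {a | R.rnDeriv Q a ≠ 0}
  have hS : MeasurableSet S := Measure.measurable_rnDeriv _ _ (measurableSet_singleton 0).compl
  set e : E → ℝ≥0∞ := S.indicator fun a => ENNReal.ofReal (exp (llr R Q a))
  have hind : ∀ x : ι → E,
      (Set.univ.pi fun _ => S).indicator (fun x => ENNReal.ofReal (exp (∑ k, llr R Q (x k)))) x
        = ∏ k, e (x k) := fun x => by
    by_cases hx : x ∈ Set.univ.pi fun _ => S
    · rw [Set.indicator_of_mem hx, exp_sum,
        ENNReal.ofReal_prod_of_nonneg fun _ _ => (exp_pos _).le]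
      exact Finset.prod_congr rfl fun k _ => (Set.indicator_of_mem (Set.mem_univ_pi.1 hx k)
        (fun a => ENNReal.ofReal (exp (llr R Q a)))).symm
    · obtain ⟨k, hk⟩ := not_forall.1 (mt Set.mem_univ_pi.2 hx)
      rw [Set.indicator_of_notMem hx]
      exact (Finset.prod_eq_zero (Finset.mem_univ k) (Set.indicator_of_notMem hk _)).symm
  calc ∫⁻ x in Set.univ.pi fun _ => S, ENNReal.ofReal (exp (∑ k, llr R Q (x k)))
        ∂(Measure.pi fun _ => Q)
      = ∫⁻ x, ∏ k, e (x k) ∂(Measure.pi fun _ => Q) := by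
        rw [← lintegral_indicator (.univ_pi fun _ => hS)]
        exact lintegral_congr hind
    _ = (∫⁻ a, e a ∂Q) ^ Fintype.card ι :=
        lintegral_pi_prod_eq_pow Q ((measurable_llr R Q).exp.ennreal_ofReal.indicator hS)
    _ ≤ (∫⁻ a, R.rnDeriv Q a ∂Q) ^ Fintype.card ι := by
        gcongr with a
        by_cases ha : a ∈ S
        · rw [show e a = _ from Set.indicator_of_mem ha _]
          exact ofReal_exp_log_toReal_le ha
        · simp [e, ha]
    _ ≤ R Set.univ ^ Fintype.card ι := by
        gcongr
        exact Measure.lintegral_rnDeriv_le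

section MarginalAverage

variable {E ι : Type*} [MeasurableSpace E] [Fintype ι]

noncomputable def marginalAverage (P : Measure (ι → E)) : Measure E :=
  (Fintype.card ι : ℝ≥0∞)⁻¹ • ∑ k, P.map (fun x => x k)

variable {P : Measure (ι → E)}

lemma map_eval_le_card_smul_marginalAverage (k : ι) :
    P.map (fun x => x k) ≤ (Fintype.card ι : ℝ≥0∞) • marginalAverage P := by
  have : Nonempty ι := ⟨k⟩
  have : (Fintype.card ι : ℝ≥0∞) ≠ 0 := by simp
  rw [marginalAverage, smul_smul, ENNReal.mul_inv_cancel this (ENNReal.natCast_ne_top _), one_smul]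
  exact Finset.single_le_sum (f := fun j => P.map (fun x => x j)) (fun _ _ => Measure.zero_le _)
    (Finset.mem_univ k)

instance isProbabilityMeasure_marginalAverage [Nonempty ι] [IsProbabilityMeasure P] :
    IsProbabilityMeasure (marginalAverage P) := by
  constructor
  simp [marginalAverage, Measure.map_apply (measurable_pi_apply _) MeasurableSet.univ,
    ENNReal.inv_mul_cancel]

lemma map_eval_absolutelyContinuous {Q : Measure E} [IsProbabilityMeasure Q]
    (hPQ : P ≪ Measure.pi fun _ => Q) (k : ι) : P.map (fun x => x k) ≪ Q :=
  (measurePreserving_eval (fun _ => Q) k).map_eq ▸ hPQ.map (measurable_pi_apply k)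

lemma marginalAverage_absolutelyContinuous {Q : Measure E} [IsProbabilityMeasure Q]
    (hPQ : P ≪ Measure.pi fun _ => Q) : marginalAverage P ≪ Q := by
  refine Measure.AbsolutelyContinuous.mk fun s _ hQs => ?_
  simp [marginalAverage, map_eval_absolutelyContinuous hPQ _ hQs]

lemma integrable_marginalAverage [Nonempty ι] {f : E → ℝ}
    (hf : ∀ k, Integrable f (P.map (fun x => x k))) :
    Integrable f (marginalAverage P) :=
  (integrable_finsetSum_measure.2 fun k _ => hf k).smul_measure (by simp)

lemma card_mul_integral_marginalAverage [Nonempty ι] {f : E → ℝ}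
    (hf : ∀ k, Integrable f (P.map (fun x => x k))) :
    (Fintype.card ι : ℝ) * ∫ a, f a ∂(marginalAverage P) = ∫ x, ∑ k, f (x k) ∂P := by
  have hf' : ∀ k, Integrable (fun x => f (x k)) P := fun k =>
    (integrable_map_measure (hf k).aestronglyMeasurable
      (measurable_pi_apply k).aemeasurable).1 (hf k)
  rw [marginalAverage, integral_smul_measure, integral_finsetSum_measure fun k _ => hf k,
    integral_finsetSum _ fun k _ => hf' k]
  simp only [ENNReal.toReal_inv, ENNReal.toReal_natCast, smul_eq_mul]
  rw [← mul_assoc, mul_inv_cancel₀ (by simp), one_mul]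
  exact Finset.sum_congr rfl fun k _ =>
    integral_map (measurable_pi_apply k).aemeasurable (hf k).aestronglyMeasurable

theorem card_mul_integral_llr_marginalAverage_le [Nonempty ι] [IsProbabilityMeasure P]
    {Q : Measure E} [IsProbabilityMeasure Q] (hPQ : P ≪ Measure.pi fun _ => Q)
    (hllr : Integrable (llr P (Measure.pi fun _ => Q)) P) :
    Integrable (llr (marginalAverage P) Q) (marginalAverage P) ∧
      (Fintype.card ι : ℝ) * ∫ a, llr (marginalAverage P) Q a ∂(marginalAverage P)
        ≤ ∫ x, llr P (Measure.pi fun _ => Q) x ∂P := by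
  have hPbarQ := marginalAverage_absolutelyContinuous hPQ
  set Pbar := marginalAverage P
  set φ := llr Pbar Q
  have hφ_meas : Measurable φ := measurable_llr _ _
  set T := Set.univ.pi fun _ : ι => {a | Pbar.rnDeriv Q a ≠ 0}
  have hT : MeasurableSet T :=
    .univ_pi fun _ => Measure.measurable_rnDeriv _ _ (measurableSet_singleton 0).compl
  have hPT : ∀ᵐ x ∂P, x ∈ T := by
    refine (ae_all_iff.2 fun k => ?_).mono fun x hx => Set.mem_univ_pi.2 hx
    exact ae_of_ae_map (measurable_pi_apply k).aemeasurable
      (Measure.absolutelyContinuous_of_le_smul (map_eval_le_card_smul_marginalAverage k)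
        ((Measure.rnDeriv_pos hPbarQ).mono fun a ha => ha.ne'))
  have hexp : ∫⁻ x in T, ENNReal.ofReal (exp (∑ k, φ (x k))) ∂(Measure.pi fun _ => Q) ≤ 1 :=
    by simpa using setLIntegral_exp_sum_llr_le (ι := ι) Pbar Q
  have hlow : ∀ k, Integrable (fun x => min (φ (x k)) 0) P := fun k =>
    (integrable_map_measure ((measurable_llr _ _).min measurable_const).aestronglyMeasurable
      (measurable_pi_apply k).aemeasurable).1
      (((integrable_min_llr_zero hPbarQ).smul_measure (by simp)).mono_measure
        (map_eval_le_card_smul_marginalAverage k))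
  obtain ⟨hsum, hle⟩ := integral_le_integral_llr_of_setLIntegral_exp_le (T := T) (μ := P)
    (ν := Measure.pi fun _ => Q) (g := fun x => ∑ k, φ (x k))
    (h := fun x => ∑ k, min (φ (x k)) 0) hPQ hllr (by fun_prop)
    (integrable_finsetSum _ fun k _ => hlow k)
    (fun x => Finset.sum_le_sum fun k _ => min_le_left _ 0) hT hPT hexp
  have hφ : ∀ k, Integrable φ (P.map (fun x => x k)) := fun k =>
    (integrable_map_measure hφ_meas.aestronglyMeasurable (measurable_pi_apply k).aemeasurable).2 <|
      integrable_of_integrable_sum_of_le (μ := P) (f := fun k x => φ (x k))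
        (h := fun k x => min (φ (x k)) 0)
        (fun k => (hφ_meas.comp (measurable_pi_apply k)).aestronglyMeasurable) hsum hlow
        (fun k x => min_le_left _ 0) k
  exact ⟨integrable_marginalAverage hφ, (card_mul_integral_marginalAverage hφ).trans_le hle⟩

end MarginalAverage

theorem klDiv_avg_marginal_le_general {E : Type*} [MeasurableSpace E]
    (l : ℕ) (hl : 1 ≤ l) (P : Measure (Fin l → E)) (Q : Measure E)
    [IsProbabilityMeasure P] [IsProbabilityMeasure Q] :
    (l : ℝ≥0∞) * klDiv ((l : ℝ≥0∞)⁻¹ • ∑ k : Fin l, P.map (fun f => f k)) Q ≤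
      klDiv P (Measure.pi (fun _ : Fin l => Q)) := by
  have : Nonempty (Fin l) := ⟨⟨0, hl⟩⟩
  rw [show (l : ℝ≥0∞)⁻¹ • ∑ k : Fin l, P.map (fun f => f k) = marginalAverage P by
    simp [marginalAverage]]
  by_cases hD : klDiv P (Measure.pi fun _ => Q) = ∞
  · simp [hD]
  obtain ⟨hPQ, hllr⟩ := klDiv_ne_top_iff.1 hD
  obtain ⟨hint, hle⟩ := card_mul_integral_llr_marginalAverage_le hPQ hllr
  rw [klDiv_of_ac_of_integrable hPQ hllr,
    klDiv_of_ac_of_integrable (marginalAverage_absolutelyContinuous hPQ) hint,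
    ← ENNReal.ofReal_natCast, ← ENNReal.ofReal_mul (Nat.cast_nonneg l)]
  exact ENNReal.ofReal_le_ofReal (by simpa using hle)

/-- The divergence of `P` from the `l`-fold product `Q^l` is at least `l` times the
divergence of the average of the marginals of `P` from `Q`. -/
theorem klDiv_avg_marginal_le {E : Type*} [MeasurableSpace E] [StandardBorelSpace E]
    (l : ℕ) (hl : 1 ≤ l) (P : Measure (Fin l → E)) (Q : Measure E)
    [IsProbabilityMeasure P] [IsProbabilityMeasure Q] :
    (l : ℝ≥0∞) * klDiv ((l : ℝ≥0∞)⁻¹ • ∑ k : Fin l, P.map (fun f => f k)) Q ≤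
      klDiv P (Measure.pi (fun _ : Fin l => Q)) :=
  klDiv_avg_marginal_le_general l hl P Q
end

section
/- Let μ be a probability measure on ℝ concentrated on [0,∞) whose mean m = ∫ x dμ(x) is finite and strictly positive, and let r > 0. Then D(μ ‖ Exp(r)) ≥ r·m − 1 − ln(r·m). (Equivalently: among all nonnegative distributions with mean m, the exponential distribution with mean m minimizes the divergence from Exp(r), yielding this value.) -/
open MeasureTheory Real ProbabilityTheory
open scoped ENNReal NNReal

/-!
For every test function `f`, the Donsker–Varadhan inequality gives
`D(μ ‖ ν) ≥ ∫ f dμ - log ∫ exp f dν`. Take `ν = Exp(r)` and for `f` the log-density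
`x ↦ (r - s) x + log (s / r)` of `Exp(s)` with respect to `Exp(r)`, where `s = 1 / m`:
then `∫ exp f dν = 1`, and `∫ f dμ = r m - 1 - log (r m)` depends on `μ` only through its
mean.
-/

namespace MeasureTheory

variable {α : Type*} [MeasurableSpace α] {μ ν : Measure α} {f : α → ℝ}

/-- Donsker–Varadhan: Gibbs' inequality for `μ` against the tilted measure `ν.tilted f`. -/
theorem integral_sub_log_integral_exp_le_integral_llr [IsProbabilityMeasure μ] [SigmaFinite ν]
    (hμν : μ ≪ ν) (h_int : Integrable (llr μ ν) μ) (hfμ : Integrable f μ)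
    (hfν : Integrable (fun x ↦ exp (f x)) ν) :
    ∫ x, f x ∂μ - log (∫ x, exp (f x) ∂ν) ≤ ∫ x, llr μ ν x ∂μ := by
  have : NeZero ν := ⟨fun hν ↦ IsProbabilityMeasure.ne_zero μ
    (Measure.absolutelyContinuous_zero_iff.mp (hν ▸ hμν))⟩
  have := isProbabilityMeasure_tilted hfν
  have gibbs := InformationTheory.integral_llr_add_sub_measure_univ_nonneg
    (hμν.trans (absolutelyContinuous_tilted hfν))
    (integrable_llr_tilted_right hμν hfμ h_int hfν)
  rw [integral_llr_tilted_right hμν hfμ hfν h_int] at gibbs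
  simp only [probReal_univ] at gibbs
  linarith

theorem ofReal_integral_sub_log_integral_exp_le_klDiv [IsProbabilityMeasure μ] [SigmaFinite ν]
    (hfμ : Integrable f μ) (hfν : Integrable (fun x ↦ exp (f x)) ν) :
    ENNReal.ofReal (∫ x, f x ∂μ - log (∫ x, exp (f x) ∂ν)) ≤ klDiv μ ν := by
  unfold klDiv
  split_ifs with h
  · exact ENNReal.ofReal_le_ofReal
      (integral_sub_log_integral_exp_le_integral_llr h.1 h.2 hfμ hfν)
  · exact le_top

end MeasureTheory

namespace ProbabilityTheory

variable {r s : ℝ}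

lemma exponentialPDF_mul_ofReal_exp (hr : 0 < r) (hs : 0 < s) (x : ℝ) :
    exponentialPDF r x * ENNReal.ofReal (exp ((r - s) * x + log (s / r))) =
      exponentialPDF s x := by
  rcases lt_or_ge x 0 with hx | hx
  · simp [exponentialPDF_of_neg hx]
  rw [exponentialPDF_of_nonneg hx, exponentialPDF_of_nonneg hx,
    ← ENNReal.ofReal_mul (by positivity)]
  congr 1
  rw [exp_add, exp_log (div_pos hs hr), show -(s * x) = -(r * x) + (r - s) * x by ring, exp_add]
  field_simp

lemma lintegral_exp_expMeasure (hr : 0 < r) (hs : 0 < s) :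
    ∫⁻ x, ENNReal.ofReal (exp ((r - s) * x + log (s / r))) ∂expMeasure r = 1 := by
  change ∫⁻ x, _ ∂volume.withDensity (exponentialPDF r) = 1
  rw [lintegral_withDensity_eq_lintegral_mul _
    (show Measurable (exponentialPDF r) from (measurable_exponentialPDFReal r).ennreal_ofReal)
    (by fun_prop)]
  simp only [Pi.mul_apply, exponentialPDF_mul_ofReal_exp hr hs]
  exact lintegral_exponentialPDF_eq_one hs

lemma integrable_exp_expMeasure (hr : 0 < r) (hs : 0 < s) :
    Integrable (fun x ↦ exp ((r - s) * x + log (s / r))) (expMeasure r) := by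
  refine (lintegral_ofReal_ne_top_iff_integrable (by fun_prop)
    (.of_forall fun _ ↦ (exp_pos _).le)).mp ?_
  simp [lintegral_exp_expMeasure hr hs]

lemma integral_exp_expMeasure (hr : 0 < r) (hs : 0 < s) :
    ∫ x, exp ((r - s) * x + log (s / r)) ∂expMeasure r = 1 := by
  rw [← ENNReal.ofReal_eq_one, ofReal_integral_eq_lintegral_ofReal
    (integrable_exp_expMeasure hr hs) (.of_forall fun _ ↦ (exp_pos _).le)]
  exact lintegral_exp_expMeasure hr hs

end ProbabilityTheory

theorem klDiv_expMeasure_ge_general (μ : Measure ℝ) [IsProbabilityMeasure μ]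
    (hint : Integrable (fun x : ℝ => x) μ)
    (hm : 0 < ∫ x, x ∂μ) (r : ℝ) (hr : 0 < r) :
    ENNReal.ofReal (r * (∫ x, x ∂μ) - 1 - Real.log (r * ∫ x, x ∂μ)) ≤
      klDiv μ (expMeasure r) := by
  set m := ∫ x, x ∂μ
  have hs : 0 < m⁻¹ := inv_pos.mpr hm
  have := isProbabilityMeasure_expMeasure hr
  have key := ofReal_integral_sub_log_integral_exp_le_klDiv
    (f := fun x ↦ (r - m⁻¹) * x + log (m⁻¹ / r))
    ((hint.const_mul _).add (integrable_const _)) (integrable_exp_expMeasure hr hs)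
  rw [integral_exp_expMeasure hr hs, log_one, sub_zero, integral_add (hint.const_mul _)
    (integrable_const _), integral_const_mul, integral_const] at key
  convert key using 2
  rw [probReal_univ, one_smul, div_eq_mul_inv, ← mul_inv, log_inv, mul_comm m r]
  field_simp
  ring

/-- Among nonnegative distributions of given finite positive mean `m`, the divergence
from the exponential distribution with rate `r` is at least `r * m - 1 - log (r * m)`;
the minimum is attained by the exponential distribution with mean `m`. -/
theorem klDiv_expMeasure_ge (μ : Measure ℝ) [IsProbabilityMeasure μ]
    (hμ : μ (Set.Iio 0) = 0) (hint : Integrable (fun x : ℝ => x) μ)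
    (hm : 0 < ∫ x, x ∂μ) (r : ℝ) (hr : 0 < r) :
    ENNReal.ofReal (r * (∫ x, x ∂μ) - 1 - Real.log (r * ∫ x, x ∂μ)) ≤
      klDiv μ (expMeasure r) :=
  klDiv_expMeasure_ge_general μ hint hm r hr
end

section
/- Fix real numbers γ ≥ 1 and b₀ < 1, and define the sequence (b_k) recursively by b_{k+1} = γ/(2 − b_k) + 1 − γ. Then b_k < 1 for every k (so the recursion is well defined, 2 − b_k > 1 > 0), and the sequence converges to 2 − γ as k → ∞. -/
open Filter
open scoped Topology

/-- For `γ ≥ 1` and `b₀ < 1`, the recursion `b_(k+1) = γ/(2 - b_k) + 1 - γ` stays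
below `1` and converges to `2 - γ`. -/
theorem hc_recursion_tendsto (γ b₀ : ℝ) (hγ : 1 ≤ γ) (hb₀ : b₀ < 1)
    (b : ℕ → ℝ) (h0 : b 0 = b₀)
    (hrec : ∀ k, b (k + 1) = γ / (2 - b k) + 1 - γ) :
    (∀ k, b k < 1) ∧ Tendsto b atTop (𝓝 (2 - γ)) := by
  have hγ0 : (0:ℝ) < γ := lt_of_lt_of_le one_pos hγ
  have h1 : ∀ k, b k < 1 := by
    intro k
    induction k with
    | zero => rw [h0]; exact hb₀
    | succ n ih =>
      have hd : 1 < 2 - b n := by linarith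
      have hlt : γ / (2 - b n) < γ := by
        rw [div_lt_iff₀ (by linarith)]
        nlinarith
      rw [hrec]; linarith
  refine ⟨h1, ?_⟩
  have hd : ∀ k, 1 < 2 - b k := fun k => by have := h1 k; linarith
  set e : ℕ → ℝ := fun k => b k - (2 - γ) with he_def
  have he : ∀ k, e (k + 1) = e k / (2 - b k) := by
    intro k
    have hne : 2 - b k ≠ 0 := by have := hd k; linarith
    simp only [he_def, hrec]
    field_simp
    ring
  have hbe : b = fun k => e k + (2 - γ) := by funext k; simp [he_def]
  suffices hL : Tendsto e atTop (𝓝 0) by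
    rw [hbe]
    simpa using hL.add tendsto_const_nhds
  have key : ∀ L, Tendsto e atTop (𝓝 L) → γ - L ≠ 0 → L * (γ - L) = L := by
    intro L hLe hne
    have hb : Tendsto b atTop (𝓝 (L + (2 - γ))) := by
      rw [hbe]; exact hLe.add tendsto_const_nhds
    have h2b : Tendsto (fun k => 2 - b k) atTop (𝓝 (γ - L)) := by
      have := (tendsto_const_nhds (x := (2:ℝ))).sub hb
      convert this using 2
      ring
    have hdiv : Tendsto (fun k => e k / (2 - b k)) atTop (𝓝 (L / (γ - L))) :=
      hLe.div h2b hne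
    have hshift : Tendsto (fun k => e (k + 1)) atTop (𝓝 L) :=
      hLe.comp (tendsto_add_atTop_nat 1)
    have hdiv' : Tendsto (fun k => e (k + 1)) atTop (𝓝 (L / (γ - L))) := by
      simpa only [← he] using hdiv
    have hLeq : L = L / (γ - L) := tendsto_nhds_unique hshift hdiv'
    field_simp at hLeq
    linarith [hLeq]
  by_cases h0e : e 0 ≤ 0
  · -- monotone, nonpositive case
    have hneg : ∀ k, e k ≤ 0 := by
      intro k
      induction k with
      | zero => exact h0e
      | succ n ih =>
        rw [he n]
        exact div_nonpos_of_nonpos_of_nonneg ih (by have := hd n; linarith)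
    have hmono : Monotone e := by
      apply monotone_nat_of_le_succ
      intro n
      rw [he n]
      rw [le_div_iff₀ (by have := hd n; linarith)]
      nlinarith [hneg n, hd n]
    have hbdd : BddAbove (Set.range e) := ⟨0, by rintro x ⟨k, rfl⟩; exact hneg k⟩
    have htend : Tendsto e atTop (𝓝 (⨆ k, e k)) := tendsto_atTop_ciSup hmono hbdd
    set L := ⨆ k, e k with hLdef
    have hL0 : L ≤ 0 := ciSup_le hneg
    have hne : γ - L ≠ 0 := by intro h; nlinarith
    have heq := key L htend hne
    have : L = 0 := by nlinarith [sq_nonneg L]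
    rwa [this] at htend
  · -- antitone, positive case
    push_neg at h0e
    have hpos : ∀ k, 0 < e k := by
      intro k
      induction k with
      | zero => exact h0e
      | succ n ih =>
        rw [he n]
        exact div_pos ih (by have := hd n; linarith)
    have hanti : Antitone e := by
      apply antitone_nat_of_succ_le
      intro n
      rw [he n]
      exact le_of_lt (div_lt_self (hpos n) (hd n))
    have hbdd : BddBelow (Set.range e) := ⟨0, by rintro x ⟨k, rfl⟩; exact le_of_lt (hpos k)⟩
    have htend : Tendsto e atTop (𝓝 (⨅ k, e k)) := tendsto_atTop_ciInf hanti hbdd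
    set L := ⨅ k, e k with hLdef
    have hL0 : 0 ≤ L := le_ciInf fun k => le_of_lt (hpos k)
    have hLe0 : L ≤ e 0 := ciInf_le hbdd 0
    have he0 : e 0 = b₀ - (2 - γ) := by simp [he_def, h0]
    have hgL : 1 < γ - L := by
      rw [he0] at hLe0
      linarith
    have hne : γ - L ≠ 0 := by linarith
    have heq := key L htend hne
    have : L = 0 := by nlinarith [sq_nonneg L]
    rwa [this] at htend
end
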